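/- Let Ω ⊂ ℝ^d be a nonempty compact convex set, let μ_src and μ_tgt be Borel probability measures supported in Ω, and let H ∈ ℕ. Suppose (W⋆_0, W⋆_1) is a pair of continuous functions on Ω that is feasible and optimal for the static dual problem on Ω, and that moreover W⋆_0 = T_1 W⋆_1 on all of Ω. For h = 0,…,H+1, define V_h := T_{1 − h/(H+1)} W⋆_1. Then (V_0,…,V_{H+1}) is feasible and optimal for the dynamic dual LP on Ω with horizon H. -/

import Mathlib

/-!
The times `s_h = 1 - h/(H+1)` drop by `1/(H+1)` at each step, so every dynamic constraint is an
instance of the Hopf–Lax semigroup inequality `T_{t+u} f x ≤ ‖x - y‖²/(2t) + T_u f y`, obtained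
from a minimiser `z` of `T_u f y` and the three-point bound
`‖x - z‖²/(t+u) ≤ ‖x - y‖²/t + ‖y - z‖²/u`.
For optimality, chaining the constraints of any dynamic feasible family `U` along `H + 1` equal
steps of the segment `[x, y] ⊆ Ω` makes `(U_0, U_{H+1})` statically feasible, so its objective is
at most that of `(W₀, W₁)`; this is the objective of `V`, since `V_0 = T_1 W₁ = W₀` `μ_src`-a.e.
and `V_{H+1} = T_0 W₁ = W₁`.
-/

open MeasureTheory

/-- The `s`-scaled Bellman operator on a set `Ω`:
`(T_s f)(x) = min_{y ∈ Ω} { ‖x−y‖²/(2s) + f(y) }` for `s > 0`, and `T_0 f = f`. -/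
noncomputable def bellman {d : ℕ} (Ω : Set (EuclideanSpace ℝ (Fin d))) (s : ℝ)
    (f : EuclideanSpace ℝ (Fin d) → ℝ) (x : EuclideanSpace ℝ (Fin d)) : ℝ :=
  if s = 0 then f x else sInf ((fun y => ‖x - y‖ ^ 2 / (2 * s) + f y) '' Ω)

/-- Feasibility for the dynamic dual LP on `Ω` with horizon `H'`. -/
def DynDualFeasible {d : ℕ} (Ω : Set (EuclideanSpace ℝ (Fin d))) (H' : ℕ)
    (V : ℕ → EuclideanSpace ℝ (Fin d) → ℝ) : Prop :=
  (∀ h ≤ H' + 1, ContinuousOn (V h) Ω) ∧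
  ∀ h ≤ H', ∀ x ∈ Ω, ∀ y ∈ Ω,
    V h x ≤ ((H' : ℝ) + 1) / 2 * ‖x - y‖ ^ 2 + V (h + 1) y

/-- Feasibility for the static dual problem on `Ω`. -/
def StaticDualFeasible {d : ℕ} (Ω : Set (EuclideanSpace ℝ (Fin d)))
    (W₀ W₁ : EuclideanSpace ℝ (Fin d) → ℝ) : Prop :=
  ContinuousOn W₀ Ω ∧ ContinuousOn W₁ Ω ∧
  ∀ x ∈ Ω, ∀ y ∈ Ω, W₀ x ≤ 1 / 2 * ‖x - y‖ ^ 2 + W₁ y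

open Finset

lemma norm_sub_sq_div_le_add {E : Type*} [SeminormedAddCommGroup E] (x y z : E) {t u : ℝ}
    (ht : 0 < t) (hu : 0 < u) :
    ‖x - z‖ ^ 2 / (2 * (t + u)) ≤ ‖x - y‖ ^ 2 / (2 * t) + ‖y - z‖ ^ 2 / (2 * u) := by
  have htri : ‖x - z‖ ≤ ‖x - y‖ + ‖y - z‖ := norm_sub_le_norm_sub_add_norm_sub x y z
  have hxz := norm_nonneg (x - z)
  rw [div_add_div _ _ (by positivity) (by positivity),
    div_le_div_iff₀ (by positivity) (by positivity)]
  nlinarith [mul_self_le_mul_self hxz htri, sq_nonneg (u * ‖x - y‖ - t * ‖y - z‖), mul_pos ht hu]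

section Bellman

variable {d : ℕ} {Ω : Set (EuclideanSpace ℝ (Fin d))} {f : EuclideanSpace ℝ (Fin d) → ℝ}

lemma bellman_zero : bellman Ω 0 f = f := by
  funext x; simp [bellman]

lemma bellman_le (hcomp : IsCompact Ω) (hf : ContinuousOn f Ω) {s : ℝ} (hs : s ≠ 0)
    (x : EuclideanSpace ℝ (Fin d)) {y : EuclideanSpace ℝ (Fin d)} (hy : y ∈ Ω) :
    bellman Ω s f x ≤ ‖x - y‖ ^ 2 / (2 * s) + f y := by
  rw [bellman, if_neg hs]
  exact csInf_le (hcomp.bddBelow_image (by fun_prop)) ⟨y, hy, rfl⟩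

lemma exists_bellman_eq (hcomp : IsCompact Ω) (hne : Ω.Nonempty) (hf : ContinuousOn f Ω)
    {s : ℝ} (hs : s ≠ 0) (x : EuclideanSpace ℝ (Fin d)) :
    ∃ y ∈ Ω, bellman Ω s f x = ‖x - y‖ ^ 2 / (2 * s) + f y := by
  obtain ⟨y, hy, hmin⟩ := (hcomp.image_of_continuousOn (by fun_prop)).sInf_mem
    (hne.image fun y => ‖x - y‖ ^ 2 / (2 * s) + f y)
  exact ⟨y, hy, by rw [bellman, if_neg hs]; exact hmin.symm⟩

lemma bellman_continuousOn (hcomp : IsCompact Ω) (hf : ContinuousOn f Ω) (s : ℝ) :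
    ContinuousOn (bellman Ω s f) Ω := by
  by_cases hs : s = 0
  · rwa [hs, bellman_zero]
  · have hK : IsCompact (Set.univ : Set Ω) := isCompact_iff_isCompact_univ.mp hcomp
    set φ : EuclideanSpace ℝ (Fin d) → Ω → ℝ := fun x y => ‖x - y‖ ^ 2 / (2 * s) + f y
    have hcont : Continuous ↿φ :=
      (((continuous_fst.sub (continuous_subtype_val.comp continuous_snd)).norm.pow 2).div_const _).add
        ((continuousOn_iff_continuous_domRestrict.mp hf).comp continuous_snd)
    refine (hK.continuous_sInf hcont).continuousOn.congr fun x _ => ?_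
    rw [bellman, if_neg hs, Set.image_eq_range]
    simp only [Set.image_univ, φ]

lemma bellman_add_le (hcomp : IsCompact Ω) (hf : ContinuousOn f Ω) {t u : ℝ} (ht : 0 < t)
    (hu : 0 ≤ u) (x : EuclideanSpace ℝ (Fin d)) {y : EuclideanSpace ℝ (Fin d)} (hy : y ∈ Ω) :
    bellman Ω (t + u) f x ≤ ‖x - y‖ ^ 2 / (2 * t) + bellman Ω u f y := by
  rcases hu.eq_or_lt with rfl | hu
  · simpa [bellman_zero] using bellman_le hcomp hf ht.ne' x hy
  obtain ⟨z, hz, hyz⟩ := exists_bellman_eq hcomp ⟨y, hy⟩ hf hu.ne' y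
  calc bellman Ω (t + u) f x ≤ ‖x - z‖ ^ 2 / (2 * (t + u)) + f z :=
        bellman_le hcomp hf (by positivity) x hz
    _ ≤ ‖x - y‖ ^ 2 / (2 * t) + (‖y - z‖ ^ 2 / (2 * u) + f z) := by
        linarith [norm_sub_sq_div_le_add x y z ht hu]
    _ = ‖x - y‖ ^ 2 / (2 * t) + bellman Ω u f y := by rw [hyz]

end Bellman

section DualFeasibility

variable {d : ℕ} {Ω : Set (EuclideanSpace ℝ (Fin d))} {H : ℕ}
  {U : ℕ → EuclideanSpace ℝ (Fin d) → ℝ}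

lemma DynDualFeasible.le_sum_add (hU : DynDualFeasible Ω H U) {z : ℕ → EuclideanSpace ℝ (Fin d)}
    (hz : ∀ k ≤ H + 1, z k ∈ Ω) {k : ℕ} (hk : k ≤ H + 1) :
    U 0 (z 0) ≤ ∑ j ∈ range k, ((H : ℝ) + 1) / 2 * ‖z j - z (j + 1)‖ ^ 2 + U k (z k) := by
  induction k with
  | zero => simp
  | succ k ih =>
    have hstep := hU.2 k (by omega) (z k) (hz k (by omega)) (z (k + 1)) (hz (k + 1) hk)
    rw [sum_range_succ]
    linarith [ih (by omega)]

lemma DynDualFeasible.staticDualFeasible (hconv : Convex ℝ Ω) (hU : DynDualFeasible Ω H U) :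
    StaticDualFeasible Ω (U 0) (U (H + 1)) := by
  refine ⟨hU.1 0 (by omega), hU.1 (H + 1) le_rfl, fun x hx y hy => ?_⟩
  have hN : (0 : ℝ) < H + 1 := by positivity
  set z : ℕ → EuclideanSpace ℝ (Fin d) := fun k => AffineMap.lineMap x y ((k : ℝ) / (H + 1))
  have hz : ∀ k ≤ H + 1, z k ∈ Ω := fun k hk => hconv.lineMap_mem hx hy
    ⟨by positivity, (div_le_one hN).mpr (by exact_mod_cast hk)⟩
  have hstep : ∀ j, ‖z j - z (j + 1)‖ = ‖x - y‖ / (H + 1) := fun j => by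
    rw [← dist_eq_norm, ← dist_eq_norm, dist_lineMap_lineMap, Real.dist_eq, ← sub_div, abs_div,
      abs_of_pos hN]
    push_cast
    simp [inv_mul_eq_div]
  have hchain := hU.le_sum_add hz le_rfl
  simp only [hstep, sum_const, card_range, nsmul_eq_mul] at hchain
  have hz0 : z 0 = x := by simp [z]
  have hzN : z (H + 1) = y := by simp [z, div_self hN.ne']
  rw [hz0, hzN] at hchain
  convert hchain using 2
  push_cast; field_simp

end DualFeasibility

theorem stmt16_general {d : ℕ} (Ω : Set (EuclideanSpace ℝ (Fin d)))
    (hcomp : IsCompact Ω) (hconv : Convex ℝ Ω)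
    (μsrc μtgt : Measure (EuclideanSpace ℝ (Fin d)))
    (hsrc : μsrc Ωᶜ = 0) (H : ℕ)
    (W₀ W₁ : EuclideanSpace ℝ (Fin d) → ℝ)
    (hWfeas : StaticDualFeasible Ω W₀ W₁)
    (hWopt : ∀ U₀ U₁, StaticDualFeasible Ω U₀ U₁ →
      ∫ x, U₀ x ∂μsrc - ∫ x, U₁ x ∂μtgt ≤ ∫ x, W₀ x ∂μsrc - ∫ x, W₁ x ∂μtgt)
    (hW₀ : ∀ x ∈ Ω, W₀ x = bellman Ω 1 W₁ x) :
    DynDualFeasible Ω H (fun h => bellman Ω (1 - (h : ℝ) / ((H : ℝ) + 1)) W₁) ∧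
    ∀ U : ℕ → EuclideanSpace ℝ (Fin d) → ℝ, DynDualFeasible Ω H U →
      ∫ x, U 0 x ∂μsrc - ∫ x, U (H + 1) x ∂μtgt ≤
        ∫ x, bellman Ω (1 - (0 : ℝ) / ((H : ℝ) + 1)) W₁ x ∂μsrc -
          ∫ x, bellman Ω (1 - ((H : ℝ) + 1) / ((H : ℝ) + 1)) W₁ x ∂μtgt := by
  have hW₁ : ContinuousOn W₁ Ω := hWfeas.2.1
  have hN : (0 : ℝ) < H + 1 := by positivity
  refine ⟨⟨fun h _ => bellman_continuousOn hcomp hW₁ _, fun h hh x _ y hy => ?_⟩, fun U hU => ?_⟩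
  · have hstep : 1 - (h : ℝ) / (H + 1) = 1 / (H + 1) + (1 - ((h + 1 : ℕ) : ℝ) / (H + 1)) := by
      push_cast; ring
    have hnext : 0 ≤ 1 - ((h + 1 : ℕ) : ℝ) / (H + 1) :=
      sub_nonneg.mpr ((div_le_one hN).mpr (by exact_mod_cast Nat.succ_le_succ hh))
    simp only [hstep]
    convert bellman_add_le hcomp hW₁ (t := 1 / (H + 1)) (by positivity) hnext x hy using 2
    field_simp
  · rw [show 1 - (0 : ℝ) / (H + 1) = 1 by simp, div_self hN.ne', sub_self, bellman_zero]
    calc ∫ x, U 0 x ∂μsrc - ∫ x, U (H + 1) x ∂μtgt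
        ≤ ∫ x, W₀ x ∂μsrc - ∫ x, W₁ x ∂μtgt := hWopt _ _ (hU.staticDualFeasible hconv)
      _ = ∫ x, bellman Ω 1 W₁ x ∂μsrc - ∫ x, W₁ x ∂μtgt := by
        congr 1
        exact integral_congr_ae ((ae_iff.mpr hsrc).mono hW₀)

/-- from an optimal static dual pair `(W⋆_0, W⋆_1)` with `W⋆_0 = T_1 W⋆_1` on
`Ω`, the family `V_h := T_{1 − h/(H+1)} W⋆_1` is feasible and optimal for the dynamic dual
LP on `Ω` with horizon `H`. -/
theorem stmt16 {d : ℕ} (Ω : Set (EuclideanSpace ℝ (Fin d)))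
    (hne : Ω.Nonempty) (hcomp : IsCompact Ω) (hconv : Convex ℝ Ω)
    (μsrc μtgt : Measure (EuclideanSpace ℝ (Fin d)))
    [IsProbabilityMeasure μsrc] [IsProbabilityMeasure μtgt]
    (hsrc : μsrc Ωᶜ = 0) (htgt : μtgt Ωᶜ = 0) (H : ℕ)
    (W₀ W₁ : EuclideanSpace ℝ (Fin d) → ℝ)
    (hWfeas : StaticDualFeasible Ω W₀ W₁)
    (hWopt : ∀ U₀ U₁, StaticDualFeasible Ω U₀ U₁ →
      ∫ x, U₀ x ∂μsrc - ∫ x, U₁ x ∂μtgt ≤ ∫ x, W₀ x ∂μsrc - ∫ x, W₁ x ∂μtgt)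
    (hW₀ : ∀ x ∈ Ω, W₀ x = bellman Ω 1 W₁ x) :
    DynDualFeasible Ω H (fun h => bellman Ω (1 - (h : ℝ) / ((H : ℝ) + 1)) W₁) ∧
    ∀ U : ℕ → EuclideanSpace ℝ (Fin d) → ℝ, DynDualFeasible Ω H U →
      ∫ x, U 0 x ∂μsrc - ∫ x, U (H + 1) x ∂μtgt ≤
        ∫ x, bellman Ω (1 - (0 : ℝ) / ((H : ℝ) + 1)) W₁ x ∂μsrc -
          ∫ x, bellman Ω (1 - ((H : ℝ) + 1) / ((H : ℝ) + 1)) W₁ x ∂μtgt :=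
  stmt16_general Ω hcomp hconv μsrc μtgt hsrc H W₀ W₁ hWfeas hWopt hW₀
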